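/- Let C be a triangulated category (satisfying the octahedron axiom) with a weight structure w. Fix a morphism u : M_- → M_+ with M_- ∈ C_{w≤0} and M_+ ∈ C_{w≥0}, a distinguished triangle C₀ →v_- M_- →u M_+ →v_+ C₀[1], and a weight filtration C_{≤-2} →c_- C₀ →c_+ C_{≥1} →δ_C C_{≤-2}[1] of C₀ avoiding weights -1 and 0 (so C_{≤-2} ∈ C_{w≤-2}, C_{≥1} ∈ C_{w≥1}). Then there exist an object G of the heart C_{w=0} and morphisms π₀ : M_- → G, i₀ : G → M_+, δ_- : G → C_{≤-2}[1], δ_+ : C_{≥1} → G such that: (i) C_{≤-2} →(v_-∘c_-) M_- →π₀ G →δ_- C_{≤-2}[1] is a distinguished triangle (a weight filtration of M_- avoiding weight -1); (ii) C_{≥1} →δ_+ G →i₀ M_+ →((c_+[1])∘v_+) C_{≥1}[1] is a distinguished triangle (a weight filtration of M_+ avoiding weight 1); (iii) u = i₀ ∘ π₀; (iv) δ_C = δ_- ∘ δ_+. In particular, M_- is without weight -1 and M_+ is without weight 1. -/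

import Mathlib

open CategoryTheory CategoryTheory.Limits CategoryTheory.Pretriangulated

universe v u

/-- The shift `S[n]` of a class of objects `S`: the objects isomorphic to `A⟦n⟧`
for some `A ∈ S`. -/
def shiftedSet {C : Type u} [Category.{v} C] [HasShift C ℤ] (S : Set C) (n : ℤ) : Set C :=
  {X | ∃ A ∈ S, Nonempty (X ≅ A⟦n⟧)}

/-- A weight structure on a pretriangulated category `C`, following Bondarko. -/
structure WeightStructure (C : Type u) [Category.{v} C] [Preadditive C] [HasZeroObject C]
    [HasShift C ℤ] [∀ n : ℤ, (shiftFunctor C n).Additive] [Pretriangulated C] where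
  /-- the objects of weights `≤ 0` -/
  le : Set C
  /-- the objects of weights `≥ 0` -/
  ge : Set C
  /-- `C_{w ≤ 0}` is closed under retracts -/
  retract_le : ∀ (X M : C) (i : X ⟶ M) (r : M ⟶ X), i ≫ r = 𝟙 X → M ∈ le → X ∈ le
  /-- `C_{w ≥ 0}` is closed under retracts -/
  retract_ge : ∀ (X M : C) (i : X ⟶ M) (r : M ⟶ X), i ≫ r = 𝟙 X → M ∈ ge → X ∈ ge
  /-- `C_{w ≤ 0} ⊆ C_{w ≤ 1}` -/
  le_shift : le ⊆ shiftedSet le 1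
  /-- `C_{w ≥ 1} ⊆ C_{w ≥ 0}` -/
  ge_shift : shiftedSet ge 1 ⊆ ge
  /-- orthogonality -/
  orth : ∀ (M N : C), M ∈ le → N ∈ shiftedSet ge 1 → ∀ f : M ⟶ N, f = 0
  /-- existence of weight filtrations -/
  exists_wf : ∀ M : C, ∃ (A B : C) (a : A ⟶ M) (b : M ⟶ B) (δ : B ⟶ A⟦(1:ℤ)⟧),
    Triangle.mk a b δ ∈ (distTriang C) ∧ A ∈ le ∧ B ∈ shiftedSet ge 1

namespace WeightStructure

variable {C : Type u} [Category.{v} C] [Preadditive C] [HasZeroObject C]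
  [HasShift C ℤ] [∀ n : ℤ, (shiftFunctor C n).Additive] [Pretriangulated C]

/-- `C_{w ≤ n} := C_{w ≤ 0}[n]`. -/
def wLE (w : WeightStructure C) (n : ℤ) : Set C := shiftedSet w.le n

/-- `C_{w ≥ n} := C_{w ≥ 0}[n]`. -/
def wGE (w : WeightStructure C) (n : ℤ) : Set C := shiftedSet w.ge n

/-- The heart `C_{w = 0} := C_{w ≤ 0} ∩ C_{w ≥ 0}`. -/
def heart (w : WeightStructure C) : Set C := w.le ∩ w.ge

/-- An object `M` is without weights `m, …, n` if it admits a weight filtration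
avoiding these weights. -/
def WithoutWeights (w : WeightStructure C) (m n : ℤ) (M : C) : Prop :=
  ∃ (A B : C) (a : A ⟶ M) (b : M ⟶ B) (δ : B ⟶ A⟦(1:ℤ)⟧),
    Triangle.mk a b δ ∈ (distTriang C) ∧ A ∈ w.wLE (m - 1) ∧ B ∈ w.wGE (n + 1)

end WeightStructure

/-!
Take `G` to be the cone of the composite `Cle ⟶ C₀ ⟶ Mm`. The rotated triangle
`Mm ⟶ G ⟶ Cle⟦1⟧` exhibits `G` as an extension of `Cle⟦1⟧` (of weights `≤ -1`) by `Mm`, while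
the octahedron on `cm` and `vm` produces a triangle `Cge ⟶ G ⟶ Mp`, exhibiting `G` as an
extension of `Mp` by `Cge` (of weights `≥ 1`). Both `C_{w ≤ 0}` and `C_{w ≥ 0}` are closed under
extensions, so `G` lies in the heart, and the two identities are commutativities of the
octahedron.

Closure under extensions: if `Y` is an extension of objects of `C_{w ≤ 0}` and `A ⟶ Y ⟶ B` is a
weight decomposition, then `Y ⟶ B` vanishes by orthogonality, so `Y` is a retract of `A`.
Dually for `C_{w ≥ 0}`, using a weight decomposition of `Y` shifted by `-1`.
-/

namespace CategoryTheory.Pretriangulated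

variable {C : Type u} [Category.{v} C] [Preadditive C] [HasZeroObject C]
  [HasShift C ℤ] [∀ n : ℤ, (CategoryTheory.shiftFunctor C n).Additive] [Pretriangulated C]
  {T : Triangle C} {X : C}

lemma Triangle.hom_from_obj₂_eq_zero (hT : T ∈ distTriang C) (h₁ : ∀ g : T.obj₁ ⟶ X, g = 0)
    (h₃ : ∀ g : T.obj₃ ⟶ X, g = 0) (f : T.obj₂ ⟶ X) : f = 0 := by
  obtain ⟨g, rfl⟩ := T.yoneda_exact₂ hT f (h₁ _)
  rw [h₃ g, comp_zero]

lemma Triangle.hom_to_obj₂_eq_zero (hT : T ∈ distTriang C) (h₁ : ∀ g : X ⟶ T.obj₁, g = 0)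
    (h₃ : ∀ g : X ⟶ T.obj₃, g = 0) (f : X ⟶ T.obj₂) : f = 0 := by
  obtain ⟨g, rfl⟩ := T.coyoneda_exact₂ hT f (h₃ _)
  rw [h₁ g, zero_comp]

lemma distinguished_of_iso_obj₂ (hT : T ∈ distTriang C) (e : T.obj₂ ≅ X) :
    Triangle.mk (T.mor₁ ≫ e.hom) (e.inv ≫ T.mor₂) T.mor₃ ∈ distTriang C := by
  refine isomorphic_distinguished _ hT _ (Iso.symm ?_)
  exact Triangle.isoMk _ _ (Iso.refl _) e (Iso.refl _) (Category.id_comp _).symm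
    ((Category.comp_id _).trans (e.hom_inv_id_assoc _).symm)
    (((congrArg _ (Functor.map_id _ _)).trans (Category.comp_id _)).trans (Category.id_comp _).symm)

end CategoryTheory.Pretriangulated

section ShiftedSet

variable {C : Type u} [Category.{v} C] [HasShift C ℤ] {S : Set C}

lemma mem_shiftedSet_of_iso {X Y : C} {n : ℤ} (e : X ≅ Y) (hY : Y ∈ shiftedSet S n) :
    X ∈ shiftedSet S n := by
  obtain ⟨A, hA, ⟨e'⟩⟩ := hY
  exact ⟨A, hA, ⟨e ≪≫ e'⟩⟩

lemma shift_mem_shiftedSet {X : C} {a b c : ℤ} (hX : X ∈ shiftedSet S a) (h : a + b = c) :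
    X⟦b⟧ ∈ shiftedSet S c := by
  obtain ⟨A, hA, ⟨e⟩⟩ := hX
  exact ⟨A, hA, ⟨(shiftFunctor C b).mapIso e ≪≫ (shiftFunctorAdd' C a b c h).symm.app A⟩⟩

end ShiftedSet

namespace WeightStructure

variable {C : Type u} [Category.{v} C] [Preadditive C] [HasZeroObject C]
  [HasShift C ℤ] [∀ n : ℤ, (shiftFunctor C n).Additive] [Pretriangulated C]
  (w : WeightStructure C)

lemma mem_le_of_iso {X Y : C} (e : X ≅ Y) (hY : Y ∈ w.le) : X ∈ w.le :=
  w.retract_le X Y e.hom e.inv e.hom_inv_id hY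

lemma mem_ge_of_iso {X Y : C} (e : X ≅ Y) (hY : Y ∈ w.ge) : X ∈ w.ge :=
  w.retract_ge X Y e.hom e.inv e.hom_inv_id hY

lemma mem_wLE_zero_iff {X : C} : X ∈ w.wLE 0 ↔ X ∈ w.le :=
  ⟨fun ⟨A, hA, ⟨e⟩⟩ ↦ w.mem_le_of_iso (e ≪≫ (shiftFunctorZero C ℤ).app A) hA,
    fun hX ↦ ⟨X, hX, ⟨((shiftFunctorZero C ℤ).app X).symm⟩⟩⟩

lemma mem_wGE_zero_iff {X : C} : X ∈ w.wGE 0 ↔ X ∈ w.ge :=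
  ⟨fun ⟨A, hA, ⟨e⟩⟩ ↦ w.mem_ge_of_iso (e ≪≫ (shiftFunctorZero C ℤ).app A) hA,
    fun hX ↦ ⟨X, hX, ⟨((shiftFunctorZero C ℤ).app X).symm⟩⟩⟩

lemma wLE_mono {m n : ℤ} (h : m ≤ n) : w.wLE m ⊆ w.wLE n := by
  induction n, h using Int.leInduction with
  | base => exact subset_rfl
  | succ n _ ih =>
    rintro X hX
    obtain ⟨A, hA, ⟨e⟩⟩ := ih hX
    exact mem_shiftedSet_of_iso e (shift_mem_shiftedSet (w.le_shift hA) (add_comm 1 n))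

lemma hom_eq_zero_of_mem_wLE_of_mem_wGE {X Y : C} {n : ℤ} (hX : X ∈ w.wLE n)
    (hY : Y ∈ w.wGE (n + 1)) (f : X ⟶ Y) : f = 0 := by
  obtain ⟨A, hA, ⟨eX⟩⟩ := hX
  obtain ⟨B, hB, ⟨eY⟩⟩ := hY
  let eY' : Y ≅ (B⟦(1 : ℤ)⟧)⟦n⟧ := eY ≪≫ (shiftFunctorAdd' C 1 n (n + 1) (add_comm 1 n)).app B
  obtain ⟨g, hg⟩ := (shiftFunctor C n).map_surjective (eX.inv ≫ f ≫ eY'.hom)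
  have hf : f = eX.hom ≫ (shiftFunctor C n).map g ≫ eY'.inv := by simp [hg]
  rw [hf, w.orth A _ hA ⟨B, hB, ⟨Iso.refl _⟩⟩ g, Functor.map_zero, zero_comp, comp_zero]

lemma exists_distTriang_mem_wLE_mem_wGE (M : C) (n : ℤ) :
    ∃ (A B : C) (a : A ⟶ M) (b : M ⟶ B) (δ : B ⟶ A⟦(1 : ℤ)⟧),
      Triangle.mk a b δ ∈ distTriang C ∧ A ∈ w.wLE n ∧ B ∈ w.wGE (n + 1) := by
  obtain ⟨A, B, a, b, δ, hT, hA, hB⟩ := w.exists_wf (M⟦-n⟧)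
  let T := (shiftFunctor (Triangle C) n).obj (Triangle.mk a b δ)
  let e : T.obj₂ ≅ M := (shiftFunctorCompIsoId C (-n) n (neg_add_cancel n)).app M
  refine ⟨_, _, T.mor₁ ≫ e.hom, e.inv ≫ T.mor₂, T.mor₃, ?_, ⟨A, hA, ⟨Iso.refl _⟩⟩,
    shift_mem_shiftedSet hB (add_comm 1 n)⟩
  exact distinguished_of_iso_obj₂ (Triangle.shift_distinguished _ hT n) e

lemma mem_le_of_distTriang {T : Triangle C} (hT : T ∈ distTriang C) (h₁ : T.obj₁ ∈ w.le)
    (h₃ : T.obj₃ ∈ w.le) : T.obj₂ ∈ w.le := by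
  obtain ⟨A, B, a, b, δ, hT', hA, hB⟩ := w.exists_wf T.obj₂
  have hb : b = 0 := T.hom_from_obj₂_eq_zero hT (w.orth _ _ h₁ hB) (w.orth _ _ h₃ hB) b
  have : Epi a := (Triangle.mk a b δ).epi₁ hT' hb
  have := isSplitEpi_of_epi a
  exact w.retract_le _ _ (section_ a) a (IsSplitEpi.id a) hA

lemma mem_ge_of_distTriang {T : Triangle C} (hT : T ∈ distTriang C) (h₁ : T.obj₁ ∈ w.ge)
    (h₃ : T.obj₃ ∈ w.ge) : T.obj₂ ∈ w.ge := by
  obtain ⟨A, B, a, b, δ, hT', hA, hB⟩ := w.exists_distTriang_mem_wLE_mem_wGE T.obj₂ (-1)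
  rw [neg_add_cancel, mem_wGE_zero_iff] at hB
  have orth {Y : C} (hY : Y ∈ w.ge) (g : A ⟶ Y) : g = 0 :=
    w.hom_eq_zero_of_mem_wLE_of_mem_wGE hA (by rwa [neg_add_cancel, mem_wGE_zero_iff]) g
  have ha : a = 0 := T.hom_to_obj₂_eq_zero hT (orth h₁) (orth h₃) a
  have : Mono b := (Triangle.mk a b δ).mono₂ hT' ha
  have := isSplitMono_of_mono b
  exact w.retract_ge _ _ b (retraction b) (IsSplitMono.id b) hB

end WeightStructure

/-- The main factorization theorem: if the cone `C₀[1]` of `u : M₋ ⟶ M₊` (with `M₋` of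
weights `≤ 0` and `M₊` of weights `≥ 0`) is such that `C₀` is without weights `-1` and `0`,
then `u` factors through an object `G` of the heart, via a weight filtration of `M₋`
avoiding weight `-1` and a weight filtration of `M₊` avoiding weight `1`, compatibly with
the connecting morphism of the chosen weight filtration of `C₀`. -/
theorem main_factorization
    {C : Type u} [Category.{v} C] [Preadditive C] [HasZeroObject C]
    [HasShift C ℤ] [∀ n : ℤ, (shiftFunctor C n).Additive] [Pretriangulated C]
    [IsTriangulated C]
    (w : WeightStructure C) (Mm Mp C₀ Cle Cge : C)
    (u : Mm ⟶ Mp) (hMm : Mm ∈ w.le) (hMp : Mp ∈ w.ge)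
    (vm : C₀ ⟶ Mm) (vp : Mp ⟶ C₀⟦(1:ℤ)⟧)
    (hu : Triangle.mk vm u vp ∈ distTriang C)
    (cm : Cle ⟶ C₀) (cp : C₀ ⟶ Cge) (δC : Cge ⟶ Cle⟦(1:ℤ)⟧)
    (hC : Triangle.mk cm cp δC ∈ distTriang C)
    (hCle : Cle ∈ w.wLE (-2)) (hCge : Cge ∈ w.wGE 1) :
    ∃ (G : C) (_ : G ∈ w.heart) (π₀ : Mm ⟶ G) (i₀ : G ⟶ Mp)
      (δm : G ⟶ Cle⟦(1:ℤ)⟧) (δp : Cge ⟶ G),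
      Triangle.mk (cm ≫ vm) π₀ δm ∈ (distTriang C) ∧
      Triangle.mk δp i₀ (vp ≫ (shiftFunctor C (1:ℤ)).map cp) ∈ (distTriang C) ∧
      u = π₀ ≫ i₀ ∧ δC = δp ≫ δm := by
  obtain ⟨G, π₀, δm, hG⟩ := distinguished_cocone_triangle (cm ≫ vm)
  have oct := Triangulated.someOctahedron rfl hC hu hG
  have hCle_shift : Cle⟦(1 : ℤ)⟧ ∈ w.le := w.mem_wLE_zero_iff.1 <|
    w.wLE_mono (m := -1) (by norm_num) (shift_mem_shiftedSet hCle (by norm_num))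
  have hGle : G ∈ w.le := w.mem_le_of_distTriang (rot_of_distTriang _ hG) hMm hCle_shift
  have hGge : G ∈ w.ge := w.mem_ge_of_distTriang oct.mem (w.ge_shift hCge) hMp
  exact ⟨G, ⟨hGle, hGge⟩, π₀, oct.m₃, δm, oct.m₁, hG, oct.mem, oct.comm₃.symm, oct.comm₂.symm⟩
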